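/- Let m ≥ 1 and x₁,...,x_N be real numbers that are pairwise distinct modulo 1. If (c₁,...,c_N) ∈ ℝ^N satisfies ∑_{k=1}^N c_k = 0 and ∑_{k=1}^N ∑_{k'=1}^N (−1)^m B_{2m}(x_k − x_{k'}) c_k c_{k'} = 0, then c_k = 0 for all k. -/

import Mathlib

/-- The periodic Bernoulli-type function `B_{2m}(x) = ∑_{β ≠ 0} e^{-2πiβx}/(2πiβ)^{2m}`. -/
noncomputable def periodicBernoulli (m : ℕ) (x : ℝ) : ℂ :=
  ∑' β : {β : ℤ // β ≠ 0},
    Complex.exp (-(2 * Real.pi * Complex.I * ((β : ℤ) : ℂ) * x)) /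
      (2 * Real.pi * Complex.I * ((β : ℤ) : ℂ)) ^ (2 * m)

open Complex Real ComplexConjugate

/-!
Since `(2πiβ)^{2m} = (-1)^m (2πβ)^{2m}`, the form is `∑_{β ≠ 0} |∑_k c_k e^{-2πiβx_k}|² / (2πβ)^{2m}`,
a convergent series of nonnegative terms. If it vanishes, every `∑_k c_k z_k^β` with
`z_k = e^{-2πix_k}` vanishes for `β ≥ 1`, and for `β = 0` this is `∑ c_k = 0`. The `z_k` are
distinct because the `x_k` are distinct modulo 1, so the Vandermonde matrix `(z_k^j)` is
invertible and `c = 0`.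
-/

lemma summable_inv_two_pi_mul_int_pow {m : ℕ} (hm : 1 ≤ m) :
    Summable fun β : {β : ℤ // β ≠ 0} => ((2 * π * (β : ℝ)) ^ (2 * m))⁻¹ := by
  refine (((summable_one_div_int_pow.mpr (by omega : 1 < 2 * m)).mul_left
    ((2 * π) ^ (2 * m))⁻¹).subtype {β | β ≠ 0}).congr fun β => ?_
  simp only [Function.comp_apply, one_div, mul_pow, mul_inv, mul_comm]

lemma two_pi_I_mul_pow_two_mul (t : ℂ) (m : ℕ) :
    (2 * π * I * t) ^ (2 * m) = (-1) ^ m * (2 * π * t) ^ (2 * m) := by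
  have : (2 * π * I * t) ^ 2 = -1 * (2 * π * t) ^ 2 := by
    ring_nf; rw [I_sq]; ring
  rw [pow_mul, pow_mul, this, mul_pow]

lemma neg_one_pow_mul_periodicBernoulli (m : ℕ) (d : ℝ) :
    (-1) ^ m * periodicBernoulli m d =
      ∑' β : {β : ℤ // β ≠ 0},
        (((2 * π * (β : ℝ)) ^ (2 * m))⁻¹ : ℝ) * exp (-(2 * π * I * (β : ℤ) * d)) := by
  rw [periodicBernoulli, ← tsum_mul_left]
  refine tsum_congr fun β => ?_
  have hβ : ((β : ℤ) : ℂ) ≠ 0 := by exact_mod_cast β.2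
  rw [two_pi_I_mul_pow_two_mul]
  push_cast
  field_simp

lemma exp_neg_two_pi_I_mul_sub (n : ℤ) (y y' : ℝ) :
    exp (-(2 * π * I * n * ((y - y' : ℝ) : ℂ))) =
      exp (-(2 * π * I * n * y)) * conj (exp (-(2 * π * I * n * y'))) := by
  rw [← exp_conj, ← Complex.exp_add]
  congr 1
  simp only [map_neg, map_mul, conj_I, conj_ofReal, map_intCast, map_ofNat]
  push_cast
  ring

lemma injective_exp_neg_two_pi_I_mul {ι : Type*} {x : ι → ℝ}
    (hx : ∀ k k', k ≠ k' → ∀ n : ℤ, x k - x k' ≠ n) :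
    Function.Injective fun k => exp (-(2 * π * I * x k)) := by
  intro k k' h
  by_contra hne
  obtain ⟨n, hn⟩ := exp_eq_exp_iff_exists_int.mp h
  refine hx k' k (Ne.symm hne) n ?_
  have h2piI : 2 * π * I ≠ 0 := by simp [pi_ne_zero, I_ne_zero]
  have : ((x k' - x k : ℝ) : ℂ) = n := mul_left_cancel₀ h2piI (by push_cast; linear_combination hn)
  exact_mod_cast this

theorem hasSum_mul_normSq_sum {ι κ : Type*} [Fintype κ] {w : ι → ℝ} (hw : Summable w)
    {f : κ → ι → ℂ} (hf : ∀ k β, ‖f k β‖ = 1) (c : κ → ℝ) :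
    HasSum (fun β => w β * normSq (∑ k, c k * f k β))
      (∑ k, ∑ k', (∑' β, w β * (f k β * conj (f k' β))).re * c k * c k') := by
  have hentry : ∀ k k', HasSum (fun β => (w β * (f k β * conj (f k' β))).re * c k * c k')
      ((∑' β, w β * (f k β * conj (f k' β))).re * c k * c k') := by
    intro k k'
    have hsum : Summable fun β => (w β : ℂ) * (f k β * conj (f k' β)) :=
      Summable.of_norm_bounded hw.abs fun β => by simp [hf]
    exact ((hasSum_re hsum.hasSum).mul_right _).mul_right _
  convert hasSum_sum fun k _ => hasSum_sum fun k' _ => hentry k k' using 1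
  funext β
  set S := ∑ k, c k * f k β
  calc w β * normSq S = (S * conj S * w β).re := by
        rw [mul_conj, ← ofReal_mul, ofReal_re, mul_comm]
    _ = ∑ k, ∑ k', ((c k * f k β) * conj (c k' * f k' β) * w β).re := by
        rw [Finset.sum_comm]
        simp only [S, map_sum, Finset.sum_mul, Finset.mul_sum, re_sum]
    _ = _ := by
        refine Finset.sum_congr rfl fun k _ => Finset.sum_congr rfl fun k' _ => ?_
        rw [map_mul, conj_ofReal, show (c k : ℂ) * f k β * (c k' * conj (f k' β)) * w β =
          (c k * c k' : ℝ) * (w β * (f k β * conj (f k' β))) by push_cast; ring, re_ofReal_mul]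
        ring

lemma eq_zero_of_hasSum_mul_normSq_eq_zero {ι : Type*} {w : ι → ℝ} (hw : ∀ β, 0 < w β)
    {S : ι → ℂ} (h : HasSum (fun β => w β * normSq (S β)) 0) (β : ι) : S β = 0 := by
  have hnonneg : ∀ β, 0 ≤ w β * normSq (S β) := fun β => mul_nonneg (hw β).le (normSq_nonneg _)
  have := congrFun ((hasSum_zero_iff_of_nonneg hnonneg).mp h) β
  simpa [(hw β).ne'] using this

theorem quadratic_form_definite (m : ℕ) (hm : 1 ≤ m) (N : ℕ) (x : Fin N → ℝ)
    (hx : ∀ k k', k ≠ k' → ∀ n : ℤ, x k - x k' ≠ n)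
    (c : Fin N → ℝ) (hc : ∑ k, c k = 0)
    (hq : ∑ k, ∑ k', ((-1 : ℂ) ^ m * periodicBernoulli m (x k - x k')).re * c k * c k' = 0) :
    ∀ k, c k = 0 := by
  set f : Fin N → {β : ℤ // β ≠ 0} → ℂ := fun k β => exp (-(2 * π * I * (β : ℤ) * x k))
  have hf : ∀ k β, ‖f k β‖ = 1 := fun k β => by simp [f, norm_exp]
  have hparseval := hasSum_mul_normSq_sum (summable_inv_two_pi_mul_int_pow hm) hf c
  simp only [f, ← exp_neg_two_pi_I_mul_sub, ← neg_one_pow_mul_periodicBernoulli, hq] at hparseval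
  have hS := eq_zero_of_hasSum_mul_normSq_eq_zero
    (fun β => inv_pos.mpr ((even_two_mul m).pow_pos (by simpa [pi_ne_zero] using β.2))) hparseval
  have hpow (n : ℕ) : ∑ k, (c k : ℂ) * exp (-(2 * π * I * x k)) ^ n = 0 := by
    rcases Nat.eq_zero_or_pos n with rfl | hn
    · simp only [pow_zero, mul_one]
      exact_mod_cast hc
    · convert hS ⟨n, by omega⟩ using 3 with k
      rw [← Complex.exp_nat_mul]
      push_cast
      ring_nf
  intro k
  simpa using congrFun (Matrix.eq_zero_of_forall_pow_sum_mul_pow_eq_zero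
    (injective_exp_neg_two_pi_I_mul hx) fun n => hpow n) k
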